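/- arXiv:2602.10925 — 4 statements merged into one kernel-verified Lean document; each statement's English description precedes it below -/
import Mathlib

section
/- Let N ≥ K ≥ 2 with K even, let σ, ω ≥ 0, and let ξ_1, …, ξ_{K−1} and u_0, …, u_{K−1} be real random variables such that the full family is independent, each ξ_j has the Gaussian law with mean 0 and variance σ²/N, and each u_j has the Gaussian law with mean 0 and variance ω². Define Y_j = Σ_{l=1}^{j} ξ_l + u_j for j = 0, …, K−1 (with Y_0 = u_0). Then the pre-averaged return r* = (1/K)(Σ_{j=K/2}^{K−1} Y_j − Σ_{j=0}^{K/2−1} Y_j) has the Gaussian law with mean 0 and variance σ²·K·ψ_K/N + ω²/K, where ψ_K = (1 + 2K^{−2})/12. -/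
/-!
Summation by parts writes `r*` as a linear combination of the independent Gaussian variables:
`ξ_l` carries the tent weight `min(l, K − l) / K` and `u_j` the weight `∓ 1 / K` according as `j`
lies in the first or the second half of the window. Such a combination is Gaussian with
variance `∑ c_i² Var_i`, and `∑_{l<K} min(l, K − l)² = K (K² + 2) / 12` for even `K`.
-/

open MeasureTheory ProbabilityTheory Finset
open scoped NNReal

namespace ProbabilityTheory

variable {Ω ι : Type*} {mΩ : MeasurableSpace Ω} {P : Measure Ω}

lemma aemeasurable_of_map_eq_gaussianReal {X : Ω → ℝ} {μ : ℝ} {v : ℝ≥0}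
    (h : P.map X = gaussianReal μ v) : AEMeasurable X P :=
  AEMeasurable.of_map_ne_zero (by simp [h, NeZero.ne])

variable [IsProbabilityMeasure P] {X : ι → Ω → ℝ}

lemma iIndepFun.map_finsetSum_eq_gaussianReal (hX : iIndepFun X P) {μ : ι → ℝ} {v : ι → ℝ≥0}
    (hlaw : ∀ i, P.map (X i) = gaussianReal (μ i) (v i)) (s : Finset ι) :
    P.map (∑ i ∈ s, X i) = gaussianReal (∑ i ∈ s, μ i) (∑ i ∈ s, v i) := by
  classical
  induction s using Finset.induction_on with
  | empty => simp [Pi.zero_def, gaussianReal_zero_var]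
  | insert i s hi ih =>
    rw [sum_insert hi, sum_insert hi, sum_insert hi]
    exact gaussianReal_add_gaussianReal_of_indepFun
      (hX.indepFun_finsetSum_of_notMem₀
        (fun j => aemeasurable_of_map_eq_gaussianReal (hlaw j)) hi).symm (hlaw i) ih

lemma iIndepFun.map_sum_mul_eq_gaussianReal [Fintype ι] (hX : iIndepFun X P) {μ v : ι → ℝ}
    (hv : ∀ i, 0 ≤ v i) (hlaw : ∀ i, P.map (X i) = gaussianReal (μ i) (v i).toNNReal)
    (c : ι → ℝ) :
    P.map (fun ω => ∑ i, c i * X i ω) =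
      gaussianReal (∑ i, c i * μ i) (∑ i, c i ^ 2 * v i).toNNReal := by
  have hlaw_mul (i : ι) : P.map (fun ω => c i * X i ω) =
      gaussianReal (c i * μ i) (c i ^ 2 * v i).toNNReal := by
    rw [show (fun ω => c i * X i ω) = (c i * ·) ∘ X i from rfl,
      ← AEMeasurable.map_map_of_aemeasurable (measurable_const_mul _).aemeasurable
        (aemeasurable_of_map_eq_gaussianReal (hlaw i)), hlaw i, gaussianReal_map_const_mul]
    congr
    rw [Real.toNNReal_mul (sq_nonneg _), Real.toNNReal_of_nonneg (sq_nonneg _)]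
  have hsum := (hX.comp (fun i x => c i * x) fun i => measurable_const_mul (c i))
    |>.map_finsetSum_eq_gaussianReal hlaw_mul univ
  rw [Real.toNNReal_sum_of_nonneg fun i _ => mul_nonneg (sq_nonneg _) (hv i)]
  convert hsum using 2
  ext ω
  simp

end ProbabilityTheory

section Preaveraging

variable {R : Type*} [CommRing R]

lemma sum_range_mul_sum_Icc_one (a f : ℕ → R) (n : ℕ) :
    ∑ j ∈ range n, a j * ∑ l ∈ Icc 1 j, f l = ∑ l ∈ Ico 1 n, (∑ j ∈ Ico l n, a j) * f l := by
  simp_rw [mul_sum, sum_mul]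
  exact sum_comm' fun j l => by simp only [mem_range, mem_Icc, mem_Ico]; omega

lemma sum_Ico_sub_sum_range_eq_sum_sign (g : ℕ → R) {m n : ℕ} (h : m ≤ n) :
    ∑ j ∈ Ico m n, g j - ∑ j ∈ range m, g j =
      ∑ j ∈ range n, (if m ≤ j then 1 else -1) * g j := by
  rw [← sum_range_add_sum_Ico _ h, sub_eq_neg_add, ← sum_neg_distrib]
  congr 1
  · exact sum_congr rfl fun j hj => by simp [(mem_range.1 hj).not_ge]
  · exact sum_congr rfl fun j hj => by simp [(mem_Ico.1 hj).1]

lemma sum_Ico_sign_eq_min (m : ℕ) {l : ℕ} (hl : l ≤ m + m) :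
    ∑ j ∈ Ico l (m + m), (if m ≤ j then 1 else -1 : R) = (min l (m + m - l) : ℕ) := by
  rcases le_total l m with hlm | hml
  · rw [← sum_Ico_consecutive _ hlm (Nat.le_add_right m m),
      sum_congr rfl fun j hj => if_neg (mem_Ico.1 hj).2.not_ge,
      sum_congr rfl fun j hj => if_pos (mem_Ico.1 hj).1]
    simp only [sum_const, Nat.card_Ico, nsmul_eq_mul, mul_neg, mul_one,
      min_eq_left (by omega : l ≤ m + m - l)]
    rw [Nat.cast_sub hlm, Nat.add_sub_cancel]
    ring
  · rw [sum_congr rfl fun j hj => if_pos (hml.trans (mem_Ico.1 hj).1)]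
    simp [min_eq_right (by omega : m + m - l ≤ l)]

lemma preaveraged_sum_eq_weighted_sum (f g : ℕ → R) (m : ℕ) :
    ∑ j ∈ Ico m (m + m), (∑ l ∈ Icc 1 j, f l + g j) -
        ∑ j ∈ range m, (∑ l ∈ Icc 1 j, f l + g j) =
      ∑ l ∈ Ico 1 (m + m), (min l (m + m - l) : ℕ) * f l +
        ∑ j ∈ range (m + m), (if m ≤ j then 1 else -1) * g j := by
  rw [sum_Ico_sub_sum_range_eq_sum_sign _ (Nat.le_add_right m m)]
  simp_rw [mul_add]
  rw [sum_add_distrib, sum_range_mul_sum_Icc_one]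
  congr 1
  exact sum_congr rfl fun l hl => by rw [sum_Ico_sign_eq_min m (mem_Ico.1 hl).2.le]

end Preaveraging

lemma three_mul_sum_range_min_sq (m : ℕ) :
    3 * ∑ l ∈ range (m + m), min l (m + m - l) ^ 2 = m * (2 * m ^ 2 + 1) := by
  have fold : ∑ l ∈ range (m + m), min l (m + m - l) ^ 2 =
      ∑ l ∈ range m, (l ^ 2 + (l + 1) ^ 2) := by
    rw [sum_range_add, ← sum_range_reflect (fun l => min (m + l) (m + m - (m + l)) ^ 2),
      ← sum_add_distrib]
    refine sum_congr rfl fun l hl => ?_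
    have := mem_range.1 hl
    rw [min_eq_left (by omega), min_eq_right (by omega),
      show m + m - (m + (m - 1 - l)) = l + 1 by omega]
  have squares (n : ℕ) : 3 * ∑ l ∈ range n, (l ^ 2 + (l + 1) ^ 2) = n * (2 * n ^ 2 + 1) := by
    induction n with
    | zero => simp
    | succ n ih => rw [sum_range_succ, mul_add, ih]; ring
  rw [fold, squares]

lemma sum_sq_preaveraging_weights (m : ℕ) (a b : ℝ) :
    ∑ l ∈ Ico 1 (m + m), ((min l (m + m - l) : ℕ) / ((m + m : ℕ) : ℝ)) ^ 2 * a +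
        ∑ j ∈ range (m + m), ((if m ≤ j then 1 else -1) / ((m + m : ℕ) : ℝ)) ^ 2 * b =
      a * (m + m : ℕ) * ((1 + 2 / ((m + m : ℕ) : ℝ) ^ 2) / 12) + b / (m + m : ℕ) := by
  rcases Nat.eq_zero_or_pos m with rfl | hm
  · simp
  have htent : ∑ l ∈ Ico 1 (m + m), ((min l (m + m - l) : ℕ) : ℝ) ^ 2 =
      m * (2 * m ^ 2 + 1) / 3 := by
    have h3 : (3 : ℝ) * ∑ l ∈ range (m + m), ((min l (m + m - l) : ℕ) : ℝ) ^ 2 =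
        m * (2 * m ^ 2 + 1) := by
      exact_mod_cast three_mul_sum_range_min_sq m
    rw [sum_range_eq_add_Ico _ (by omega : 0 < m + m), Nat.zero_min, Nat.cast_zero,
      zero_pow two_ne_zero, zero_add] at h3
    linarith
  have hsign (j : ℕ) : ((if m ≤ j then 1 else -1 : ℝ) / ((m + m : ℕ) : ℝ)) ^ 2 * b =
      b / ((m + m : ℕ) : ℝ) ^ 2 := by
    split_ifs <;> ring
  simp_rw [hsign, div_pow, div_mul_eq_mul_div, ← sum_div, ← sum_mul, htent]
  rw [sum_const, card_range, nsmul_eq_mul]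
  have : (m : ℝ) ≠ 0 := by positivity
  push_cast
  field_simp
  ring

lemma sum_fin_pred_sum_fin {M : Type*} [AddCommMonoid M] (n : ℕ) (F : Fin (n - 1) ⊕ Fin n → M)
    (a b : ℕ → M) (ha : ∀ i : Fin (n - 1), F (.inl i) = a (i + 1))
    (hb : ∀ j : Fin n, F (.inr j) = b j) :
    ∑ i, F i = ∑ l ∈ Ico 1 n, a l + ∑ j ∈ range n, b j := by
  rw [Fintype.sum_sum_type, sum_Ico_eq_sum_range]
  simp only [ha, hb, Fin.sum_univ_eq_sum_range (fun i => a (i + 1)), Fin.sum_univ_eq_sum_range b,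
    add_comm 1]

theorem preaveraged_return_gaussian_law_general {Ω : Type*} [MeasurableSpace Ω] (P : Measure Ω)
    [IsProbabilityMeasure P] (N K : ℕ) (hKe : Even K)
    (σ w : ℝ) (ξ u : ℕ → Ω → ℝ)
    (hindep : iIndepFun (m := fun _ : Fin (K - 1) ⊕ Fin K => (inferInstance : MeasurableSpace ℝ))
      (Sum.elim (fun i : Fin (K - 1) => ξ (i.1 + 1)) (fun j : Fin K => u j.1)) P)
    (hξlaw : ∀ j, 1 ≤ j → j ≤ K - 1 →
      Measure.map (ξ j) P = gaussianReal 0 (σ ^ 2 / N).toNNReal)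
    (hulaw : ∀ j < K, Measure.map (u j) P = gaussianReal 0 (w ^ 2).toNNReal)
    (Y : ℕ → Ω → ℝ) (hY : ∀ j ω, Y j ω = (∑ l ∈ Finset.Icc 1 j, ξ l ω) + u j ω) :
    Measure.map
        (fun ω => (1 / (K : ℝ)) *
          ((∑ j ∈ Finset.Ico (K / 2) K, Y j ω) - ∑ j ∈ Finset.range (K / 2), Y j ω)) P =
      gaussianReal 0
        (σ ^ 2 * K * ((1 + 2 / (K : ℝ) ^ 2) / 12) / N + w ^ 2 / K).toNNReal := by
  obtain ⟨m, rfl⟩ := hKe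
  rw [show (m + m) / 2 = m by omega]
  set K : ℝ := ((m + m : ℕ) : ℝ)
  set a : ℕ → ℝ := fun l => ((min l (m + m - l) : ℕ) : ℝ) / K
  set b : ℕ → ℝ := fun j => (if m ≤ j then 1 else -1) / K
  set c := Sum.elim (fun i : Fin (m + m - 1) => a (i.1 + 1)) (fun j : Fin (m + m) => b j.1)
  set Z := Sum.elim (fun i : Fin (m + m - 1) => ξ (i.1 + 1)) (fun j : Fin (m + m) => u j.1)
  set v : Fin (m + m - 1) ⊕ Fin (m + m) → ℝ := Sum.elim (fun _ => σ ^ 2 / N) fun _ => w ^ 2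
  have hr (ω : Ω) : 1 / K * ((∑ j ∈ Ico m (m + m), Y j ω) - ∑ j ∈ range m, Y j ω) =
      ∑ i, c i * Z i ω := by
    rw [sum_fin_pred_sum_fin _ _ (fun l => a l * ξ l ω) (fun j => b j * u j ω) (fun _ => rfl)
      (fun _ => rfl)]
    simp only [hY, preaveraged_sum_eq_weighted_sum, a, b, mul_add, mul_sum, div_eq_inv_mul,
      one_mul, mul_assoc]
  have hv : ∀ i, 0 ≤ v i := by
    rintro (i | j)
    exacts [div_nonneg (sq_nonneg σ) N.cast_nonneg, sq_nonneg w]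
  have hlaw : ∀ i, P.map (Z i) = gaussianReal 0 (v i).toNNReal := by
    rintro (i | j)
    exacts [hξlaw _ (by omega) (by omega), hulaw _ j.2]
  simp_rw [hr]
  rw [hindep.map_sum_mul_eq_gaussianReal hv hlaw]
  simp only [mul_zero, sum_const_zero]
  rw [sum_fin_pred_sum_fin _ _ (fun l => a l ^ 2 * (σ ^ 2 / N)) (fun j => b j ^ 2 * w ^ 2)
    (fun _ => rfl) (fun _ => rfl), sum_sq_preaveraging_weights]
  congr 2
  ring

/-- Exact finite-sample law of a pre-averaged return: with independent Gaussian
efficient-price increments `ξ_1, …, ξ_{K−1} ~ N(0, σ²/N)` and Gaussian noise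
`u_0, …, u_{K−1} ~ N(0, w²)` (the full family independent), prices
`Y_j = ∑_{l=1}^j ξ_l + u_j`, and `K` even, the pre-averaged return
`r* = (1/K)(∑_{j=K/2}^{K−1} Y_j − ∑_{j=0}^{K/2−1} Y_j)` is Gaussian with mean `0`
and variance `σ² K ψ_K / N + w² / K`, where `ψ_K = (1 + 2 K⁻²)/12`. -/
theorem preaveraged_return_gaussian_law {Ω : Type*} [MeasurableSpace Ω] (P : Measure Ω)
    [IsProbabilityMeasure P] (N K : ℕ) (hKN : K ≤ N) (hK : 2 ≤ K) (hKe : Even K)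
    (σ w : ℝ) (hσ : 0 ≤ σ) (hw : 0 ≤ w) (ξ u : ℕ → Ω → ℝ)
    (hξmeas : ∀ j, Measurable (ξ j)) (humeas : ∀ j, Measurable (u j))
    (hindep : iIndepFun (m := fun _ : Fin (K - 1) ⊕ Fin K => (inferInstance : MeasurableSpace ℝ))
      (Sum.elim (fun i : Fin (K - 1) => ξ (i.1 + 1)) (fun j : Fin K => u j.1)) P)
    (hξlaw : ∀ j, 1 ≤ j → j ≤ K - 1 →
      Measure.map (ξ j) P = gaussianReal 0 (σ ^ 2 / N).toNNReal)
    (hulaw : ∀ j < K, Measure.map (u j) P = gaussianReal 0 (w ^ 2).toNNReal)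
    (Y : ℕ → Ω → ℝ) (hY : ∀ j ω, Y j ω = (∑ l ∈ Finset.Icc 1 j, ξ l ω) + u j ω) :
    Measure.map
        (fun ω => (1 / (K : ℝ)) *
          ((∑ j ∈ Finset.Ico (K / 2) K, Y j ω) - ∑ j ∈ Finset.range (K / 2), Y j ω)) P =
      gaussianReal 0
        (σ ^ 2 * K * ((1 + 2 / (K : ℝ) ^ 2) / 12) / N + w ^ 2 / K).toNNReal :=
  preaveraged_return_gaussian_law_general P N K hKe σ w ξ u hindep hξlaw hulaw Y hY
end

section
/- Let N ≥ 2 and let r_1, …, r_N be independent real random variables where r_i has the Gaussian law with mean 0 and variance v_i ≥ 0. Then E[ (π/2) Σ_{i=2}^{N} |r_{i−1}|·|r_i| ] ≤ Σ_{i=1}^{N} v_i − (v_1 + v_N)/2, with equality if and only if v_{i−1} = v_i for all i = 2, …, N. -/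
/-!
Since `E|X| = √(2v/π)` for `X ~ N(0, v)`, independence gives
`(π/2) E[|r_{i-1}| |r_i|] = √(v_{i-1} v_i)`, which is at most `(v_{i-1} + v_i)/2` by AM-GM, with
equality iff `v_{i-1} = v_i`. Summing these arithmetic means over `i = 2, …, N` counts every
variance twice except the two endpoint ones, which gives `∑ v_i - (v_1 + v_N)/2`.
-/

open MeasureTheory ProbabilityTheory Real Finset
open scoped NNReal

lemma integral_Ioi_mul_exp_neg_mul_sq {b : ℝ} (hb : 0 < b) :
    ∫ x in Set.Ioi (0 : ℝ), x * exp (-b * x ^ 2) = (2 * b)⁻¹ := by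
  have h := integral_rpow_mul_exp_neg_mul_rpow two_pos (neg_one_lt_zero.trans one_pos) hb
  norm_num [rpow_two, rpow_neg_one, ← neg_mul] at h
  rw [h, mul_inv, one_div, mul_comm]

lemma integral_abs_gaussianReal (v : ℝ≥0) :
    ∫ x, |x| ∂gaussianReal 0 v = √(2 * v / π) := by
  rcases eq_or_ne v 0 with rfl | hv
  · simp
  have hv' : (0 : ℝ) < v := by positivity
  let g : ℝ → ℝ := fun y ↦ (√(2 * π * v))⁻¹ * (y * exp (-(2 * v : ℝ)⁻¹ * y ^ 2))
  have hpdf : ∀ x, gaussianPDFReal 0 v x • |x| = g |x| := fun x ↦ by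
    simp only [gaussianPDFReal, g, smul_eq_mul, sub_zero, sq_abs, div_eq_inv_mul, neg_mul,
      mul_neg]
    ring
  calc ∫ x, |x| ∂gaussianReal 0 v = ∫ x, g |x| := by
        simp only [integral_gaussianReal_eq_integral_smul hv, hpdf]
    _ = 2 * ((√(2 * π * v))⁻¹ * (2 * (2 * v : ℝ)⁻¹)⁻¹) := by
        rw [integral_comp_abs, integral_const_mul,
          integral_Ioi_mul_exp_neg_mul_sq (by positivity)]
    _ = √(2 * v / π) := by
        rw [show 2 * (v : ℝ) / π = (2 * v) ^ 2 / (2 * π * v) by field_simp,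
          sqrt_div' _ (by positivity), sqrt_sq (by positivity)]
        field_simp

lemma integrable_abs_gaussianReal (μ : ℝ) (v : ℝ≥0) :
    Integrable (fun x ↦ |x|) (gaussianReal μ v) :=
  ((memLp_id_gaussianReal 1).integrable le_rfl).abs

namespace ProbabilityTheory

variable {Ω : Type*} [MeasurableSpace Ω] {P : Measure Ω} {X Y : Ω → ℝ} {v w : ℝ≥0}

lemma HasLaw.integrable_abs_of_gaussianReal {μ : ℝ} (hX : HasLaw X (gaussianReal μ v) P) :
    Integrable (fun ω ↦ |X ω|) P :=
  (integrable_map_measure continuous_abs.aestronglyMeasurable hX.aemeasurable).mp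
    (hX.map_eq ▸ integrable_abs_gaussianReal μ v)

lemma HasLaw.integral_abs_of_gaussianReal (hX : HasLaw X (gaussianReal 0 v) P) :
    ∫ ω, |X ω| ∂P = √(2 * v / π) :=
  (hX.integral_comp continuous_abs.aestronglyMeasurable).trans (integral_abs_gaussianReal v)

lemma IndepFun.integral_abs_mul_abs_of_gaussianReal (hXY : IndepFun X Y P)
    (hX : HasLaw X (gaussianReal 0 v) P) (hY : HasLaw Y (gaussianReal 0 w) P) :
    π / 2 * ∫ ω, |X ω| * |Y ω| ∂P = √(v * w) := by
  rw [hXY.integral_fun_comp_mul_comp (f := fun x ↦ |x|) (g := fun x ↦ |x|) hX.aemeasurable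
    hY.aemeasurable continuous_abs.aestronglyMeasurable continuous_abs.aestronglyMeasurable,
    hX.integral_abs_of_gaussianReal, hY.integral_abs_of_gaussianReal, ← sqrt_mul (by positivity),
    show 2 * (v : ℝ) / π * (2 * w / π) = (2 / π) ^ 2 * (v * w) by ring,
    sqrt_mul (by positivity), sqrt_sq (by positivity)]
  field_simp

lemma iIndepFun.indepFun_of_mem_Icc {Ω β : Type*} [MeasurableSpace Ω] [MeasurableSpace β]
    {P : Measure Ω} [IsProbabilityMeasure P] {N : ℕ} {r : ℕ → Ω → β}
    (h : iIndepFun (fun i : Fin N ↦ r (i.1 + 1)) P) {j k : ℕ} (hj : j ∈ Icc 1 N)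
    (hk : k ∈ Icc 1 N) (hjk : j ≠ k) : IndepFun (r j) (r k) P := by
  rw [mem_Icc] at hj hk
  obtain ⟨j, rfl⟩ := Nat.exists_eq_add_of_le' hj.1
  obtain ⟨k, rfl⟩ := Nat.exists_eq_add_of_le' hk.1
  exact h.indepFun (i := ⟨j, by omega⟩) (j := ⟨k, by omega⟩) (by simpa using hjk)

end ProbabilityTheory

lemma add_div_two_sub_sqrt_mul {a b : ℝ} (ha : 0 ≤ a) (hb : 0 ≤ b) :
    (a + b) / 2 - √(a * b) = (√a - √b) ^ 2 / 2 := by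
  rw [sqrt_mul ha, sub_sq, sq_sqrt ha, sq_sqrt hb]
  ring

lemma sqrt_mul_le_add_div_two {a b : ℝ} (ha : 0 ≤ a) (hb : 0 ≤ b) :
    √(a * b) ≤ (a + b) / 2 := by
  rw [← sub_nonneg, add_div_two_sub_sqrt_mul ha hb]
  positivity

lemma sqrt_mul_eq_add_div_two_iff {a b : ℝ} (ha : 0 ≤ a) (hb : 0 ≤ b) :
    √(a * b) = (a + b) / 2 ↔ a = b := by
  rw [eq_comm, ← sub_eq_zero, add_div_two_sub_sqrt_mul ha hb, div_eq_zero_iff, sq_eq_zero_iff,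
    sub_eq_zero, sqrt_inj ha hb]
  norm_num

lemma sum_Icc_two_add_pred_div_two (f : ℕ → ℝ) {N : ℕ} (hN : 1 ≤ N) :
    ∑ i ∈ Icc 2 N, (f (i - 1) + f i) / 2 = ∑ i ∈ Icc 1 N, f i - (f 1 + f N) / 2 := by
  induction N, hN using Nat.le_induction with
  | base => simp
  | succ n hn ih =>
    rw [sum_Icc_succ_top (by omega), sum_Icc_succ_top (by omega), ih, Nat.add_sub_cancel]
    ring

theorem bipower_variation_downward_bias_general {Ω : Type*} [MeasurableSpace Ω] (P : Measure Ω)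
    [IsProbabilityMeasure P] (N : ℕ) (hN : 2 ≤ N) (v : ℕ → ℝ) (hv : ∀ i, 0 ≤ v i)
    (r : ℕ → Ω → ℝ)
    (hindep : iIndepFun
      (fun i : Fin N => r (i.1 + 1)) P)
    (hlaw : ∀ i, 1 ≤ i → i ≤ N → Measure.map (r i) P = gaussianReal 0 (v i).toNNReal) :
    (∫ ω, (Real.pi / 2) * ∑ i ∈ Finset.Icc 2 N, |r (i - 1) ω| * |r i ω| ∂P ≤
        (∑ i ∈ Finset.Icc 1 N, v i) - (v 1 + v N) / 2) ∧
      ((∫ ω, (Real.pi / 2) * ∑ i ∈ Finset.Icc 2 N, |r (i - 1) ω| * |r i ω| ∂P =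
          (∑ i ∈ Finset.Icc 1 N, v i) - (v 1 + v N) / 2) ↔
        ∀ i, 2 ≤ i → i ≤ N → v (i - 1) = v i) := by
  -- `Measure.map` of a non-a.e.-measurable map is `0`, so a Gaussian law forces measurability.
  have hlaw' : ∀ i ∈ Icc 1 N, HasLaw (r i) (gaussianReal 0 (v i).toNNReal) P := fun i hi ↦
    have h := hlaw i (mem_Icc.1 hi).1 (mem_Icc.1 hi).2
    ⟨.of_map_ne_zero (h ▸ IsProbabilityMeasure.ne_zero _), h⟩
  have hmem : ∀ i ∈ Icc 2 N, i - 1 ∈ Icc 1 N ∧ i ∈ Icc 1 N := fun i hi ↦ by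
    simp only [mem_Icc] at hi ⊢
    omega
  have hpair : ∀ i ∈ Icc 2 N, IndepFun (r (i - 1)) (r i) P := fun i hi ↦
    hindep.indepFun_of_mem_Icc (hmem i hi).1 (hmem i hi).2 (by simp only [mem_Icc] at hi; omega)
  have hmean : ∫ ω, π / 2 * ∑ i ∈ Icc 2 N, |r (i - 1) ω| * |r i ω| ∂P =
      ∑ i ∈ Icc 2 N, √(v (i - 1) * v i) := by
    have hint : ∀ i ∈ Icc 2 N, Integrable (fun ω ↦ |r (i - 1) ω| * |r i ω|) P := fun i hi ↦
      ((hpair i hi).comp measurable_abs measurable_abs).integrable_mul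
        (hlaw' _ (hmem i hi).1).integrable_abs_of_gaussianReal
        (hlaw' _ (hmem i hi).2).integrable_abs_of_gaussianReal
    rw [integral_const_mul, integral_finsetSum _ hint, mul_sum]
    refine sum_congr rfl fun i hi ↦ ?_
    rw [(hpair i hi).integral_abs_mul_abs_of_gaussianReal (hlaw' _ (hmem i hi).1)
      (hlaw' _ (hmem i hi).2), coe_toNNReal _ (hv _), coe_toNNReal _ (hv _)]
  have hamgm : ∀ i ∈ Icc 2 N, √(v (i - 1) * v i) ≤ (v (i - 1) + v i) / 2 :=
    fun i _ ↦ sqrt_mul_le_add_div_two (hv _) (hv _)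
  rw [hmean, ← sum_Icc_two_add_pred_div_two v (by omega), sum_eq_sum_iff_of_le hamgm]
  refine ⟨sum_le_sum hamgm, ?_⟩
  simp only [sqrt_mul_eq_add_div_two_iff (hv _) (hv _), mem_Icc, and_imp]

/-- Downward bias of bi-power variation under time-varying volatility: for independent
Gaussian returns `r_i ~ N(0, v_i)`, `i = 1, …, N`,
`E[(π/2) ∑_{i=2}^N |r_{i−1}| |r_i|] ≤ ∑_{i=1}^N v_i − (v_1 + v_N)/2`,
with equality if and only if `v_{i−1} = v_i` for all `i = 2, …, N`. -/
theorem bipower_variation_downward_bias {Ω : Type*} [MeasurableSpace Ω] (P : Measure Ω)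
    [IsProbabilityMeasure P] (N : ℕ) (hN : 2 ≤ N) (v : ℕ → ℝ) (hv : ∀ i, 0 ≤ v i)
    (r : ℕ → Ω → ℝ) (hrmeas : ∀ i, Measurable (r i))
    (hindep : iIndepFun
      (fun i : Fin N => r (i.1 + 1)) P)
    (hlaw : ∀ i, 1 ≤ i → i ≤ N → Measure.map (r i) P = gaussianReal 0 (v i).toNNReal) :
    (∫ ω, (Real.pi / 2) * ∑ i ∈ Finset.Icc 2 N, |r (i - 1) ω| * |r i ω| ∂P ≤
        (∑ i ∈ Finset.Icc 1 N, v i) - (v 1 + v N) / 2) ∧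
      ((∫ ω, (Real.pi / 2) * ∑ i ∈ Finset.Icc 2 N, |r (i - 1) ω| * |r i ω| ∂P =
          (∑ i ∈ Finset.Icc 1 N, v i) - (v 1 + v N) / 2) ↔
        ∀ i, 2 ≤ i → i ≤ N → v (i - 1) = v i) :=
  bipower_variation_downward_bias_general P N hN v hv r hindep hlaw
end

section
/- Let N ≥ K ≥ 2 with K even. Let z, o : {0, 1, …, N} → ℝ, let S = {j : o_j ≠ 0} with |S| = m, let M = max_j |o_j|, and let R = max_{0 ≤ i ≤ N−K+1} |r*_{i,K}[z]|, where r*_{i,K}[x] = (1/K)(Σ_{j=K/2}^{K−1} x_{i+j} − Σ_{j=0}^{K/2−1} x_{i+j}). Then | Σ_{i=0}^{N−K+1} (r*_{i,K}[z+o])² − Σ_{i=0}^{N−K+1} (r*_{i,K}[z])² | ≤ m²·M·(2R + m·M/K). -/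
/-!
Write `r*[z + o] = r*[z] + r*[o]`, so each squared return changes by `r*[o] (2 r*[z] + r*[o])`.
Every window meets at most `m` outliers, whence `|r*[o]| ≤ m M / K`; and every outlier lies in
at most `K` windows with weight `1 / K` each, whence `∑_i |r*[o]| ≤ ∑_{n ∈ S} |o_n| ≤ m M`.
-/

/-- The pre-averaged return of a sequence `x` over the window of length `K`
starting at index `i`:
`r*_{i,K}[x] = (1/K)(∑_{j=K/2}^{K−1} x_{i+j} − ∑_{j=0}^{K/2−1} x_{i+j})`. -/
noncomputable def preavg (K : ℕ) (x : ℕ → ℝ) (i : ℕ) : ℝ :=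
  (1 / (K : ℝ)) *
    ((∑ j ∈ Finset.Ico (K / 2) K, x (i + j)) - ∑ j ∈ Finset.range (K / 2), x (i + j))

open Finset

theorem Finset.sum_abs_comp_le_of_injOn {ι κ : Type*} [DecidableEq κ] {A : Finset ι}
    {S : Finset κ} {f : ι → κ} {g : κ → ℝ} (hf : Set.InjOn f A)
    (hS : ∀ t ∈ A, g (f t) ≠ 0 → f t ∈ S) :
    ∑ t ∈ A, |g (f t)| ≤ ∑ n ∈ S, |g n| := by
  rw [← sum_image (f := fun n => |g n|) hf, ← sum_filter_ne_zero]
  refine sum_le_sum_of_subset_of_nonneg (fun n hn => ?_) (fun n _ _ => abs_nonneg (g n))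
  obtain ⟨hn, hn0⟩ := mem_filter.mp hn
  obtain ⟨t, ht, rfl⟩ := mem_image.mp hn
  exact hS t ht (abs_ne_zero.mp hn0)

theorem preavg_add (K : ℕ) (x y : ℕ → ℝ) (i : ℕ) :
    preavg K (fun n => x n + y n) i = preavg K x i + preavg K y i := by
  simp only [preavg, sum_add_distrib]
  ring

theorem abs_preavg_le (K : ℕ) (x : ℕ → ℝ) (i : ℕ) :
    |preavg K x i| ≤ (∑ j ∈ range K, |x (i + j)|) / K := by
  have hsplit : ∑ j ∈ range K, |x (i + j)| =
      ∑ j ∈ Ico (K / 2) K, |x (i + j)| + ∑ j ∈ range (K / 2), |x (i + j)| := by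
    rw [add_comm, range_eq_Ico, range_eq_Ico,
      sum_Ico_consecutive _ (Nat.zero_le _) (Nat.div_le_self K 2)]
  rw [preavg, abs_mul, abs_of_nonneg (by positivity), hsplit, one_div_mul_eq_div]
  gcongr
  exact (abs_sub _ _).trans (add_le_add (abs_sum_le_sum_abs _ _) (abs_sum_le_sum_abs _ _))

section Outliers

variable {K : ℕ} {o : ℕ → ℝ} {S : Finset ℕ}

theorem abs_preavg_le_sum_abs_div {i : ℕ}
    (hS : ∀ j < K, o (i + j) ≠ 0 → i + j ∈ S) :
    |preavg K o i| ≤ (∑ n ∈ S, |o n|) / K := by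
  refine (abs_preavg_le K o i).trans ?_
  gcongr
  exact sum_abs_comp_le_of_injOn (fun _ _ _ _ => Nat.add_left_cancel)
    fun j hj => hS j (mem_range.mp hj)

theorem sum_abs_preavg_le_sum_abs (hK : K ≠ 0) {T : Finset ℕ}
    (hS : ∀ i ∈ T, ∀ j < K, o (i + j) ≠ 0 → i + j ∈ S) :
    ∑ i ∈ T, |preavg K o i| ≤ ∑ n ∈ S, |o n| := by
  calc ∑ i ∈ T, |preavg K o i|
      ≤ ∑ i ∈ T, (∑ j ∈ range K, |o (i + j)|) / K :=
        sum_le_sum fun i _ => abs_preavg_le K o i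
    _ = (∑ j ∈ range K, ∑ i ∈ T, |o (i + j)|) / K := by rw [← sum_div, sum_comm]
    _ ≤ (∑ _j ∈ range K, ∑ n ∈ S, |o n|) / K := by
        gcongr with j hj
        exact sum_abs_comp_le_of_injOn (fun _ _ _ _ => Nat.add_right_cancel)
          fun i hi => hS i hi j (mem_range.mp hj)
    _ = ∑ n ∈ S, |o n| := by
        rw [sum_const, card_range, nsmul_eq_mul, mul_div_cancel_left₀ _ (Nat.cast_ne_zero.mpr hK)]

end Outliers

theorem abs_sum_sq_add_sub_sum_sq_le {ι : Type*} (T : Finset ι) (a b : ι → ℝ) {R B L : ℝ}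
    (ha : ∀ i ∈ T, |a i| ≤ R) (hb : ∀ i ∈ T, |b i| ≤ B) (hL : ∑ i ∈ T, |b i| ≤ L)
    (hRB : 0 ≤ 2 * R + B) :
    |∑ i ∈ T, (a i + b i) ^ 2 - ∑ i ∈ T, a i ^ 2| ≤ L * (2 * R + B) := by
  have hterm : ∀ i ∈ T, |(a i + b i) ^ 2 - a i ^ 2| ≤ |b i| * (2 * R + B) := fun i hi => by
    rw [show (a i + b i) ^ 2 - a i ^ 2 = b i * (2 * a i + b i) by ring, abs_mul]
    gcongr
    calc |2 * a i + b i| ≤ 2 * |a i| + |b i| := by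
          simpa only [abs_mul, abs_two] using abs_add_le (2 * a i) (b i)
      _ ≤ 2 * R + B := by gcongr; exacts [ha i hi, hb i hi]
  calc |∑ i ∈ T, (a i + b i) ^ 2 - ∑ i ∈ T, a i ^ 2|
      ≤ ∑ i ∈ T, |(a i + b i) ^ 2 - a i ^ 2| := by
        rw [← sum_sub_distrib]; exact abs_sum_le_sum_abs _ _
    _ ≤ (∑ i ∈ T, |b i|) * (2 * R + B) := by rw [sum_mul]; exact sum_le_sum hterm
    _ ≤ L * (2 * R + B) := by gcongr

theorem preavg_rv_outlier_robust_general (N K : ℕ) (hKN : K ≤ N) (hK : 2 ≤ K)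
    (z o : ℕ → ℝ) (S : Finset ℕ) (m : ℕ) (M R : ℝ)
    (hS : S = (Finset.range (N + 1)).filter (fun j => o j ≠ 0))
    (hm : S.card = m)
    (hM : M = (Finset.range (N + 1)).sup'
      ⟨0, Finset.mem_range.mpr (Nat.succ_pos N)⟩ (fun j => |o j|))
    (hR : R = (Finset.range (N - K + 2)).sup'
      ⟨0, Finset.mem_range.mpr (Nat.succ_pos (N - K + 1))⟩ (fun i => |preavg K z i|)) :
    |(∑ i ∈ Finset.range (N - K + 2), (preavg K (fun n => z n + o n) i) ^ 2) -
        ∑ i ∈ Finset.range (N - K + 2), (preavg K z i) ^ 2| ≤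
      (m : ℝ) ^ 2 * M * (2 * R + (m : ℝ) * M / K) := by
  have hwin : ∀ i ∈ range (N - K + 2), ∀ j < K, o (i + j) ≠ 0 → i + j ∈ S := by
    intro i hi j hj h0
    rw [hS, mem_filter, mem_range]
    exact ⟨by have := mem_range.mp hi; omega, h0⟩
  have hoM : ∀ n ∈ range (N + 1), |o n| ≤ M := fun n hn => hM ▸ le_sup' (fun j => |o j|) hn
  have hzR : ∀ i ∈ range (N - K + 2), |preavg K z i| ≤ R := fun i hi =>
    hR ▸ le_sup' (fun i => |preavg K z i|) hi
  have hM0 : 0 ≤ M := (abs_nonneg _).trans (hoM 0 (by simp))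
  have hR0 : 0 ≤ R := (abs_nonneg _).trans (hzR 0 (by simp))
  have hmass : ∑ n ∈ S, |o n| ≤ m * M := by
    rw [← hm, ← nsmul_eq_mul]
    refine sum_le_card_nsmul _ _ _ fun n hn => hoM n ?_
    rw [hS] at hn
    exact (mem_filter.mp hn).1
  simp only [preavg_add]
  calc _ ≤ m * M * (2 * R + m * M / K) :=
        abs_sum_sq_add_sub_sum_sq_le _ _ _ hzR
          (fun i hi => (abs_preavg_le_sum_abs_div (hwin i hi)).trans (by gcongr))
          ((sum_abs_preavg_le_sum_abs (by omega) hwin).trans hmass) (by positivity)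
    _ ≤ (m : ℝ) ^ 2 * M * (2 * R + m * M / K) := by
        gcongr
        exact_mod_cast Nat.le_self_pow two_ne_zero m

/-- Outlier robustness of the pre-averaged realized variance: if the outlier sequence
`o` is supported on `m` indices of `{0, …, N}` with maximal absolute size `M`, and `R`
is the maximal absolute pre-averaged return of `z`, then
`|∑_i (r*_{i,K}[z+o])² − ∑_i (r*_{i,K}[z])²| ≤ m² M (2R + m M / K)`. -/
theorem preavg_rv_outlier_robust (N K : ℕ) (hKN : K ≤ N) (hK : 2 ≤ K) (hKe : Even K)
    (z o : ℕ → ℝ) (S : Finset ℕ) (m : ℕ) (M R : ℝ)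
    (hS : S = (Finset.range (N + 1)).filter (fun j => o j ≠ 0))
    (hm : S.card = m)
    (hM : M = (Finset.range (N + 1)).sup'
      ⟨0, Finset.mem_range.mpr (Nat.succ_pos N)⟩ (fun j => |o j|))
    (hR : R = (Finset.range (N - K + 2)).sup'
      ⟨0, Finset.mem_range.mpr (Nat.succ_pos (N - K + 1))⟩ (fun i => |preavg K z i|)) :
    |(∑ i ∈ Finset.range (N - K + 2), (preavg K (fun n => z n + o n) i) ^ 2) -
        ∑ i ∈ Finset.range (N - K + 2), (preavg K z i) ^ 2| ≤
      (m : ℝ) ^ 2 * M * (2 * R + (m : ℝ) * M / K) :=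
  preavg_rv_outlier_robust_general N K hKN hK z o S m M R hS hm hM hR
end

section
/- Let N ≥ 2. Let z, o : {0, 1, …, N} → ℝ, let S = {j : o_j ≠ 0} with |S| = m, let M = max_j |o_j|, and let D = max_{1 ≤ i ≤ N} |z_i − z_{i−1}|. For a sequence x write r_i[x] = x_i − x_{i−1}. Then | Σ_{i=2}^{N} r_i[z+o]·r_{i−1}[z+o] − Σ_{i=2}^{N} r_i[z]·r_{i−1}[z] | ≤ 16·m·M·(D + M). -/
/-!
Since `r[z + o] = r[z] + r[o]`, the `i`-th summand changes by
`r_i[z] r_{i-1}[o] + r_i[o] r_{i-1}[z] + r_i[o] r_{i-1}[o]`, which has size at most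
`2MD + 2MD + 4M² = 4M(D + M)`. It vanishes unless one of `o_i, o_{i-1}, o_{i-2}` is nonzero,
that is unless `i ∈ S + {0, 1, 2}`, a set of at most `3m` indices.
-/

open Finset Pointwise

def tickReturn (x : ℕ → ℝ) (i : ℕ) : ℝ := x i - x (i - 1)

theorem tickReturn_add (x y : ℕ → ℝ) (i : ℕ) :
    tickReturn (x + y) i = tickReturn x i + tickReturn y i := by
  simp only [tickReturn, Pi.add_apply]; ring

theorem abs_tickReturn_le {x : ℕ → ℝ} {i : ℕ} {M : ℝ} (hi : |x i| ≤ M)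
    (hi' : |x (i - 1)| ≤ M) :
    |tickReturn x i| ≤ 2 * M :=
  (abs_sub _ _).trans (by linarith)

theorem abs_add_mul_add_sub_mul_le {a b u v D M : ℝ} (ha : |a| ≤ D) (hb : |b| ≤ D)
    (hu : |u| ≤ 2 * M) (hv : |v| ≤ 2 * M) :
    |(a + u) * (b + v) - a * b| ≤ 4 * M * (D + M) := by
  have hM : 0 ≤ M := by linarith [abs_nonneg u]
  calc |(a + u) * (b + v) - a * b| = |a * v + u * b + u * v| := by ring_nf
    _ ≤ |a| * |v| + |u| * |b| + |u| * |v| := by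
        simpa only [abs_mul] using abs_add_three (a * v) (u * b) (u * v)
    _ ≤ D * (2 * M) + 2 * M * D + 2 * M * (2 * M) := by gcongr; linarith [abs_nonneg a]
    _ = 4 * M * (D + M) := by ring

theorem abs_sum_le_card_mul_of_eq_zero {ι : Type*} [DecidableEq ι] {s T : Finset ι}
    {f : ι → ℝ} {C : ℝ} (hC : 0 ≤ C) (hf : ∀ i ∈ s, |f i| ≤ C)
    (hT : ∀ i ∈ s, i ∉ T → f i = 0) :
    |∑ i ∈ s, f i| ≤ #T * C := by
  have hsum : ∑ i ∈ s ∩ T, f i = ∑ i ∈ s, f i :=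
    sum_subset inter_subset_left fun i hi hiT => hT i hi fun h => hiT (mem_inter.2 ⟨hi, h⟩)
  calc |∑ i ∈ s, f i| ≤ ∑ i ∈ s ∩ T, |f i| := hsum ▸ abs_sum_le_sum_abs _ _
    _ ≤ #(s ∩ T) * C := by
        simpa only [nsmul_eq_mul] using
          sum_le_card_nsmul _ _ _ fun i hi => hf i (mem_inter.1 hi).1
    _ ≤ #T * C := by gcongr; exact inter_subset_right

theorem apply_sub_eq_zero_of_notMem_add_range {α : Type*} [Zero α] [DecidableEq α]
    {o : ℕ → α} {N n i k : ℕ} (hiN : i ≤ N) (hki : k ≤ i) (hkn : k < n)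
    (hi : i ∉ (range (N + 1)).filter (fun j => o j ≠ 0) + range n) : o (i - k) = 0 := by
  by_contra h
  refine hi (Nat.sub_add_cancel hki ▸ add_mem_add ?_ (mem_range.2 hkn))
  exact mem_filter.2 ⟨mem_range.2 (by omega), h⟩

/-- Outlier robustness of the autocovariance sum: for prices on `{0, …, N}`, if the
outlier sequence `o` is supported on `m` indices with maximal absolute size `M`, and `D`
is the maximal absolute tick return of `z`, then the first-order autocovariance sum of
the returns of `z + o` differs from that of `z` by at most `16 m M (D + M)`. -/
theorem autocovariance_outlier_robust (N : ℕ) (hN : 2 ≤ N)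
    (z o : ℕ → ℝ) (S : Finset ℕ) (m : ℕ) (M D : ℝ)
    (hS : S = (Finset.range (N + 1)).filter (fun j => o j ≠ 0))
    (hm : S.card = m)
    (hM : M = (Finset.range (N + 1)).sup'
      ⟨0, Finset.mem_range.mpr (Nat.succ_pos N)⟩ (fun j => |o j|))
    (hD : D = (Finset.Icc 1 N).sup'
      ⟨1, Finset.mem_Icc.mpr ⟨le_refl 1, hN.trans' (by norm_num)⟩⟩
      (fun i => |z i - z (i - 1)|)) :
    |(∑ i ∈ Finset.Icc 2 N,
          ((z i + o i) - (z (i - 1) + o (i - 1))) *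
            ((z (i - 1) + o (i - 1)) - (z (i - 1 - 1) + o (i - 1 - 1)))) -
        ∑ i ∈ Finset.Icc 2 N,
          (z i - z (i - 1)) * (z (i - 1) - z (i - 1 - 1))| ≤
      16 * (m : ℝ) * M * (D + M) := by
  have hoM : ∀ j ≤ N, |o j| ≤ M := fun j hj =>
    hM ▸ le_sup' (fun j => |o j|) (mem_range.2 (Nat.lt_succ_of_le hj))
  have hzD : ∀ i, 1 ≤ i → i ≤ N → |tickReturn z i| ≤ D := fun i h1 h2 =>
    hD ▸ le_sup' (fun i => |z i - z (i - 1)|) (mem_Icc.2 ⟨h1, h2⟩)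
  have hM0 : 0 ≤ M := (abs_nonneg _).trans (hoM 0 N.zero_le)
  have hD0 : 0 ≤ D := (abs_nonneg _).trans (hzD 1 le_rfl (by omega))
  have hcard : #(S + range 3) ≤ m * 3 := hm ▸ card_add_le
  show |∑ i ∈ Icc 2 N, tickReturn (z + o) i * tickReturn (z + o) (i - 1) -
      ∑ i ∈ Icc 2 N, tickReturn z i * tickReturn z (i - 1)| ≤ _
  rw [← sum_sub_distrib]
  calc _ ≤ #(S + range 3) * (4 * M * (D + M)) := by
        refine abs_sum_le_card_mul_of_eq_zero (by positivity) (fun i hi => ?_) fun i hi hiS => ?_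
        · obtain ⟨h2i, hiN⟩ := mem_Icc.1 hi
          simp only [tickReturn_add]
          exact abs_add_mul_add_sub_mul_le (hzD i (by omega) hiN)
            (hzD (i - 1) (by omega) (by omega))
            (abs_tickReturn_le (hoM i hiN) (hoM _ (by omega)))
            (abs_tickReturn_le (hoM _ (by omega)) (hoM _ (by omega)))
        · obtain ⟨h2i, hiN⟩ := mem_Icc.1 hi
          have h0 : ∀ k < 3, o (i - k) = 0 := fun k hk =>
            apply_sub_eq_zero_of_notMem_add_range hiN (by omega) hk (hS ▸ hiS)
          have h0' : o i = 0 := h0 0 (by omega)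
          have h1 : o (i - 1) = 0 := h0 1 (by omega)
          have h2 : o (i - 1 - 1) = 0 := h0 2 (by omega)
          simp [tickReturn, h0', h1, h2]
    _ ≤ (m * 3 : ℕ) * (4 * M * (D + M)) := by gcongr
    _ ≤ 16 * (m : ℝ) * M * (D + M) := by
        push_cast
        nlinarith [mul_nonneg hM0 (add_nonneg hD0 hM0)]
end
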